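/- Let H be a connected hypergraph with positive weights, let G be its clique expansion with graph effective resistance R_eff^G, and define the hypergraph effective resistance R_H(p,q) = sup_{Q_H(χ)>0} (χ^T b_pq)^2 / Q_H(χ). Then R_eff^G(p,q) ≤ R_H(p,q) ≤ (max_e (|e| choose 2)) · R_eff^G(p,q) for all p ≠ q. -/

import Mathlib

open Finset Matrix

/-- The nonlinear hypergraph quadratic form
`Q_H(χ) = ∑ₑ wₑ · max_{u,v ∈ e} (χᵤ - χᵥ)²`. -/
noncomputable def QH {V E : Type*} [Fintype E] (w : E → ℝ) (mem : E → Finset V)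
    (hne : ∀ e, (mem e).Nonempty) (χ : V → ℝ) : ℝ :=
  ∑ e, w e *
    ((mem e ×ˢ mem e).sup' ((hne e).product (hne e))
      fun p => (χ p.1 - χ p.2) ^ 2)

/-- The Laplacian quadratic form of the clique expansion (each unordered pair
of distinct vertices in a hyperedge counted once). -/
noncomputable def cliqueQ {V E : Type*} [Fintype E] [DecidableEq V]
    (w : E → ℝ) (mem : E → Finset V) (χ : V → ℝ) : ℝ :=
  ∑ e, w e * ((1 : ℝ) / 2 *
    ∑ p ∈ (mem e ×ˢ mem e).filter (fun p => p.1 ≠ p.2), (χ p.1 - χ p.2) ^ 2)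

/-!
On a single hyperedge the maximal squared difference is attained at some pair `(u, v)`; if
`u ≠ v` both orders of that pair occur among the off-diagonal terms of the clique expansion,
and each of those `2 · (|e| choose 2)` terms is itself at most the maximum. Hence
`Q_H ≤ χᵀ L_G χ ≤ (maxₑ (|e| choose 2)) · Q_H`, and comparing the two quotients
`(χᵀ b)² / Q` pointwise transfers this sandwich, reversed, to their suprema.
-/

namespace Finset

variable {V : Type*}

lemma filter_product_ne_eq_offDiag [DecidableEq V] (s : Finset V) :
    (s ×ˢ s).filter (fun p => p.1 ≠ p.2) = s.offDiag := by
  ext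
  simp [and_assoc]

lemma card_offDiag_eq_two_mul_choose_two (s : Finset V) :
    #s.offDiag = 2 * (#s).choose 2 := by
  rw [offDiag_card, Nat.choose_two_right,
    Nat.mul_div_cancel' (Nat.even_mul_pred_self _).two_dvd, Nat.mul_sub, mul_one]

end Finset

section EdgeBounds

variable {V : Type*} (s : Finset V) (hs : s.Nonempty) (χ : V → ℝ)

lemma sup'_sq_sub_nonneg :
    0 ≤ (s ×ˢ s).sup' (hs.product hs) fun p => (χ p.1 - χ p.2) ^ 2 := by
  obtain ⟨u, hu⟩ := hs
  exact le_sup'_of_le _ (mk_mem_product hu hu) (by simp)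

lemma sup'_sq_sub_le_half_sum_offDiag [DecidableEq V] :
    ((s ×ˢ s).sup' (hs.product hs) fun p => (χ p.1 - χ p.2) ^ 2) ≤
      1 / 2 * ∑ p ∈ s.offDiag, (χ p.1 - χ p.2) ^ 2 := by
  obtain ⟨⟨u, v⟩, huv, hmax⟩ :=
    exists_mem_eq_sup' (hs.product hs) fun p : V × V => (χ p.1 - χ p.2) ^ 2
  obtain ⟨hu, hv⟩ := mem_product.mp huv
  rw [hmax]
  by_cases h : u = v
  · subst h
    simpa using sum_nonneg fun p _ => sq_nonneg (χ p.1 - χ p.2)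
  · have hpair : {(u, v), (v, u)} ⊆ s.offDiag := by
      simp [insert_subset_iff, hu, hv, h, Ne.symm h]
    have hsum := sum_le_sum_of_subset_of_nonneg hpair fun p _ _ => sq_nonneg (χ p.1 - χ p.2)
    rw [sum_pair (by simp [h])] at hsum
    nlinarith

lemma half_sum_offDiag_le_choose_two_mul_sup' :
    1 / 2 * ∑ p ∈ s.offDiag, (χ p.1 - χ p.2) ^ 2 ≤
      ((#s).choose 2 : ℝ) * (s ×ˢ s).sup' (hs.product hs) fun p => (χ p.1 - χ p.2) ^ 2 := by
  have hsum : ∑ p ∈ s.offDiag, (χ p.1 - χ p.2) ^ 2 ≤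
      #s.offDiag • (s ×ˢ s).sup' (hs.product hs) fun p => (χ p.1 - χ p.2) ^ 2 :=
    sum_le_card_nsmul _ _ _ fun p hp => by
      obtain ⟨hp₁, hp₂, -⟩ := mem_offDiag.mp hp
      exact le_sup' (fun p : V × V => (χ p.1 - χ p.2) ^ 2) (mem_product.mpr ⟨hp₁, hp₂⟩)
  rw [card_offDiag_eq_two_mul_choose_two, nsmul_eq_mul] at hsum
  push_cast at hsum
  linarith

end EdgeBounds

section QuadraticForms

variable {V E : Type*} [Fintype E] {w : E → ℝ} (mem : E → Finset V)
  (hne : ∀ e, (mem e).Nonempty)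

lemma QH_nonneg (hw : ∀ e, 0 ≤ w e) (χ : V → ℝ) : 0 ≤ QH w mem hne χ :=
  sum_nonneg fun e _ => mul_nonneg (hw e) (sup'_sq_sub_nonneg _ (hne e) χ)

lemma QH_le_cliqueQ [DecidableEq V] (hw : ∀ e, 0 ≤ w e) (χ : V → ℝ) :
    QH w mem hne χ ≤ cliqueQ w mem χ := by
  simp only [QH, cliqueQ, filter_product_ne_eq_offDiag]
  exact sum_le_sum fun e _ =>
    mul_le_mul_of_nonneg_left (sup'_sq_sub_le_half_sum_offDiag _ (hne e) χ) (hw e)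

lemma cliqueQ_le_mul_QH [DecidableEq V] (hw : ∀ e, 0 ≤ w e) (χ : V → ℝ) :
    cliqueQ w mem χ ≤
      ((univ.sup fun e : E => (#(mem e)).choose 2 : ℕ) : ℝ) * QH w mem hne χ := by
  simp only [QH, cliqueQ, filter_product_ne_eq_offDiag]
  rw [mul_sum]
  refine sum_le_sum fun e _ => ?_
  have hchoose : ((#(mem e)).choose 2 : ℝ) ≤
      ((univ.sup fun e : E => (#(mem e)).choose 2 : ℕ) : ℝ) := by
    exact_mod_cast le_sup (f := fun e : E => (#(mem e)).choose 2) (mem_univ e)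
  rw [mul_left_comm _ (w e)]
  gcongr w e * ?_
  · exact hw e
  exact (half_sum_offDiag_le_choose_two_mul_sup' _ (hne e) χ).trans
    (mul_le_mul_of_nonneg_right hchoose (sup'_sq_sub_nonneg _ (hne e) χ))

end QuadraticForms

section Quotients

variable {X : Type*} {num Q Q' : X → ℝ} {c R R' : ℝ}

lemma isLUB_div_le_mul_of_le_mul (hnum : ∀ x, 0 ≤ num x) (hpos : ∀ x, 0 < Q x → 0 < Q' x)
    (hle : ∀ x, Q' x ≤ c * Q x) (hR : IsLUB {r | ∃ x, 0 < Q x ∧ r = num x / Q x} R)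
    (hR' : IsLUB {r | ∃ x, 0 < Q' x ∧ r = num x / Q' x} R') :
    R ≤ c * R' := by
  refine hR.2 ?_
  rintro _ ⟨x, hQ, rfl⟩
  have hQ' := hpos x hQ
  have hc : 0 < c := pos_of_mul_pos_left (hQ'.trans_le (hle x)) hQ.le
  calc num x / Q x ≤ num x / (Q' x / c) :=
        div_le_div_of_nonneg_left (hnum x) (div_pos hQ' hc)
          ((div_le_iff₀ hc).2 (by linarith [hle x]))
    _ = c * (num x / Q' x) := by field_simp
    _ ≤ c * R' := mul_le_mul_of_nonneg_left (hR'.1 ⟨x, hQ', rfl⟩) hc.le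

lemma isLUB_div_sandwich (hnum : ∀ x, 0 ≤ num x) (hQ : ∀ x, 0 ≤ Q x)
    (hQQ' : ∀ x, Q x ≤ Q' x) (hQ'Q : ∀ x, Q' x ≤ c * Q x)
    (hR : IsLUB {r | ∃ x, 0 < Q x ∧ r = num x / Q x} R)
    (hR' : IsLUB {r | ∃ x, 0 < Q' x ∧ r = num x / Q' x} R') :
    R' ≤ R ∧ R ≤ c * R' := by
  refine ⟨?_, isLUB_div_le_mul_of_le_mul hnum (fun x hx => hx.trans_le (hQQ' x)) hQ'Q hR hR'⟩
  have hpos : ∀ x, 0 < Q' x → 0 < Q x := fun x hx =>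
    (hQ x).lt_of_ne fun h => (hx.trans_le (hQ'Q x)).ne (by rw [← h, mul_zero])
  simpa using isLUB_div_le_mul_of_le_mul (c := 1) hnum hpos (by simpa using hQQ') hR' hR

end Quotients

theorem hypergraph_resistance_sandwich_general
    {V E : Type*} [Fintype V] [Fintype E] [DecidableEq V]
    (w : E → ℝ) (mem : E → Finset V)
    (hne : ∀ e, (mem e).Nonempty) (hw : ∀ e, 0 < w e)
    (b : V → ℝ)
    (RH RG : ℝ)
    (hRH : IsLUB {r : ℝ | ∃ χ : V → ℝ, 0 < QH w mem hne χ ∧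
      r = (χ ⬝ᵥ b) ^ 2 / QH w mem hne χ} RH)
    (hRG : IsLUB {r : ℝ | ∃ χ : V → ℝ, 0 < cliqueQ w mem χ ∧
      r = (χ ⬝ᵥ b) ^ 2 / cliqueQ w mem χ} RG) :
    RG ≤ RH ∧
      RH ≤ ((Finset.univ.sup fun e : E => (mem e).card.choose 2 : ℕ) : ℝ) * RG := by
  have hw' : ∀ e, 0 ≤ w e := fun e => (hw e).le
  exact isLUB_div_sandwich (fun χ => sq_nonneg (χ ⬝ᵥ b)) (QH_nonneg mem hne hw')
    (QH_le_cliqueQ mem hne hw') (cliqueQ_le_mul_QH mem hne hw') hRH hRG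

/-- the hypergraph effective resistance is sandwiched by the
clique-expansion effective resistance:
`R_eff^G(p,q) ≤ R_H(p,q) ≤ (maxₑ (|e| choose 2)) · R_eff^G(p,q)`. -/
theorem hypergraph_resistance_sandwich
    {V E : Type*} [Fintype V] [Fintype E] [DecidableEq V]
    (w : E → ℝ) (mem : E → Finset V)
    (hne : ∀ e, (mem e).Nonempty) (hw : ∀ e, 0 < w e)
    (hsize : ∀ e, 2 ≤ (mem e).card)
    (hconn : ∀ u v : V,
      Relation.ReflTransGen (fun a b : V => ∃ e, a ∈ mem e ∧ b ∈ mem e) u v)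
    (p q : V) (hpq : p ≠ q)
    (b : V → ℝ) (hb : b = (Pi.single p 1 - Pi.single q 1 : V → ℝ))
    (RH RG : ℝ)
    (hRH : IsLUB {r : ℝ | ∃ χ : V → ℝ, 0 < QH w mem hne χ ∧
      r = (χ ⬝ᵥ b) ^ 2 / QH w mem hne χ} RH)
    (hRG : IsLUB {r : ℝ | ∃ χ : V → ℝ, 0 < cliqueQ w mem χ ∧
      r = (χ ⬝ᵥ b) ^ 2 / cliqueQ w mem χ} RG) :
    RG ≤ RH ∧
      RH ≤ ((Finset.univ.sup fun e : E => (mem e).card.choose 2 : ℕ) : ℝ) * RG :=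
  hypergraph_resistance_sandwich_general w mem hne hw b RH RG hRH hRG
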